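/- Key overlap-periodicity transfer: Let u, v, u', v' be strings, f = (v',v), f' = (u,u'), e' = (v',u'). Suppose u and v both have periodicity w, min{|ov(f)|, |ov(f')|} > w, and |ov(e')| ≤ |ov(f)| + |ov(f')| − w, and |ov(e')| > max{|ov(f)|, |ov(f')|}. Then ov(e') has periodicity w. -/
import Mathlib


/-- A string `x` has periodicity `w` if `x[i] = x[i+w]` for all valid indices. -/
def hasPeriod {α : Type*} (s : List α) (p : ℕ) : Prop :=
  ∀ i, i + p < s.length → s[i]? = s[i + p]?

/-- `ovLen s t` is the length of `ov(s,t)`, the longest suffix of `s` that is a prefix of `t`. -/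
def ovLen {α : Type*} [DecidableEq α] (s t : List α) : ℕ :=
  Nat.findGreatest (fun k => k ≤ t.length ∧ s.drop (s.length - k) = t.take k) s.length

lemma ovLen_spec {α : Type*} [DecidableEq α] (s t : List α) :
    ovLen s t ≤ s.length ∧ ovLen s t ≤ t.length ∧
      s.drop (s.length - ovLen s t) = t.take (ovLen s t) := by
  have h := Nat.findGreatest_spec (m := 0)
    (P := fun k => k ≤ t.length ∧ s.drop (s.length - k) = t.take k) (n := s.length)
    (Nat.zero_le _) (by simp [List.drop_length])
  exact ⟨Nat.findGreatest_le _, h.1, h.2⟩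

/-- Key overlap-periodicity transfer: with `f = (v',v)`, `f' = (u,u')`, `e' = (v',u')`,
if `u` and `v` both have periodicity `w`, `min{|ov(f)|, |ov(f')|} > w`,
`|ov(e')| ≤ |ov(f)| + |ov(f')| − w` and `|ov(e')| > max{|ov(f)|, |ov(f')|}`,
then the overlap string `ov(e')` (the suffix of `v'` of length `|ov(e')|`)
has periodicity `w`. -/
theorem overlap_periodicity_transfer {α : Type*} [DecidableEq α] (u v u' v' : List α)
    (w : ℕ) (hu : hasPeriod u w) (hv : hasPeriod v w)
    (hmin : w < min (ovLen v' v) (ovLen u u'))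
    (hle : ovLen v' u' ≤ ovLen v' v + ovLen u u' - w)
    (hgt : max (ovLen v' v) (ovLen u u') < ovLen v' u') :
    hasPeriod (v'.drop (v'.length - ovLen v' u')) w := by
  obtain ⟨ha1, ha2, ha3⟩ := ovLen_spec v' v
  obtain ⟨hb1, hb2, hb3⟩ := ovLen_spec u u'
  obtain ⟨hc1, hc2, hc3⟩ := ovLen_spec v' u'
  set a := ovLen v' v with hadef
  set b := ovLen u u' with hbdef
  set c := ovLen v' u' with hcdef
  obtain ⟨hwa, hwb⟩ := lt_min_iff.mp hmin
  obtain ⟨hac, hbc⟩ := max_lt_iff.mp hgt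
  intro i hi
  rw [List.length_drop] at hi
  have hic : i + w < c := by omega
  have hx : ∀ j, j < c → (v'.drop (v'.length - c))[j]? = u'[j]? := by
    intro j hj
    rw [hc3, List.getElem?_take, if_pos hj]
  by_cases h : i + w < b
  · rw [hx i (by omega), hx (i + w) hic]
    have key : ∀ j, j < b → u'[j]? = u[u.length - b + j]? := by
      intro j hj
      rw [← List.getElem?_drop, hb3, List.getElem?_take, if_pos hj]
    rw [key i (by omega), key (i + w) h]
    have := hu (u.length - b + i) (by omega)
    rw [this]
    congr 1
    omega
  · have hca : c - a ≤ i := by omega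
    have hdrop : (v'.drop (v'.length - c)).drop (c - a) = v.take a := by
      rw [List.drop_drop]
      have : v'.length - c + (c - a) = v'.length - a := by omega
      rw [this, ha3]
    have key : ∀ j, c - a ≤ j → j < c →
        (v'.drop (v'.length - c))[j]? = v[j - (c - a)]? := by
      intro j hj1 hj2
      have : j = (c - a) + (j - (c - a)) := by omega
      rw [this, ← List.getElem?_drop, hdrop, List.getElem?_take,
        if_pos (by omega)]
      congr 1
      omega
    rw [key i hca (by omega), key (i + w) (by omega) hic]
    have := hv (i - (c - a)) (by omega)
    rw [this]
    congr 1
    omega
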